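/- arXiv:2307.08956 — 4 statements merged into one kernel-verified Lean document; each statement's English description precedes it below -/
import Mathlib

section
/- Let d, k1, k2 be natural numbers with d ≥ 1 and k1 ≠ k2. Then the entrywise Bochner integral ∫_{U(d)} U^{⊗k1} ⊗ conj(U)^{⊗k2} dμ_H(U) is the zero matrix. -/
open MeasureTheory Matrix
open scoped Kronecker

/-- The `k`-fold tensor (Kronecker) power of a `d × d` matrix, indexed by
functions `Fin k → Fin d`, with entries `∏ j, U (f j) (g j)`. -/
def tensorPow {d : ℕ} (k : ℕ) (U : Matrix (Fin d) (Fin d) ℂ) :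
    Matrix (Fin k → Fin d) (Fin k → Fin d) ℂ :=
  Matrix.of fun f g => ∏ j, U (f j) (g j)

/-- The entrywise (Bochner) integral of a matrix-valued function. -/
noncomputable def matInt {G : Type*} [MeasurableSpace G] (μ : Measure G)
    {m n : Type*} (f : G → Matrix m n ℂ) : Matrix m n ℂ :=
  Matrix.of fun i j => ∫ U, f U i j ∂μ

/-- The Borel σ-algebra on the unitary group `U(d)`. -/
noncomputable instance (d : ℕ) : MeasurableSpace (Matrix.unitaryGroup (Fin d) ℂ) :=
  borel _

instance (d : ℕ) : BorelSpace (Matrix.unitaryGroup (Fin d) ℂ) := ⟨rfl⟩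

/-- For `d ≥ 1` and `k₁ ≠ k₂`, the entrywise Haar integral
`∫ U^{⊗k₁} ⊗ conj(U)^{⊗k₂} dμ_H(U)` vanishes, where `μ_H` is the Haar probability
measure on `U(d)`, i.e. the (unique) left- and right-invariant probability measure. -/
theorem haar_unbalanced_moment_eq_zero {d k₁ k₂ : ℕ} (hd : 1 ≤ d) (hk : k₁ ≠ k₂)
    (μ : Measure (Matrix.unitaryGroup (Fin d) ℂ)) [IsProbabilityMeasure μ]
    [μ.IsMulLeftInvariant] [μ.IsMulRightInvariant] :
    matInt μ (fun U => tensorPow k₁ (U : Matrix (Fin d) (Fin d) ℂ) ⊗ₖ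
      tensorPow k₂ ((U : Matrix (Fin d) (Fin d) ℂ).map (starRingEnd ℂ))) = 0 := by
  have hn : ((k₁ : ℝ) - k₂) ≠ 0 := sub_ne_zero.mpr (by exact_mod_cast hk)
  set θ : ℝ := Real.pi / ((k₁ : ℝ) - k₂) with hθ
  set z : ℂ := Complex.exp (θ * Complex.I) with hzdef
  have hconj : (starRingEnd ℂ) z = Complex.exp (-(θ * Complex.I)) := by
    rw [hzdef, ← Complex.exp_conj]
    congr 1
    simp [Complex.conj_ofReal]
  have hzu : z * (starRingEnd ℂ) z = 1 := by
    rw [hconj, hzdef, ← Complex.exp_add]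
    simp
  have hc : z ^ k₁ * ((starRingEnd ℂ) z) ^ k₂ = -1 := by
    rw [hconj, hzdef, ← Complex.exp_nat_mul, ← Complex.exp_nat_mul, ← Complex.exp_add]
    have : (k₁ : ℂ) * (θ * Complex.I) + (k₂ : ℂ) * -(θ * Complex.I)
        = (((k₁ : ℝ) - k₂) * θ : ℝ) * Complex.I := by push_cast; ring
    rw [this, hθ]
    rw [mul_div_cancel₀ _ hn]
    exact Complex.exp_pi_mul_I
  -- the unitary V = z • 1
  have hVmem : (z • (1 : Matrix (Fin d) (Fin d) ℂ)) ∈ Matrix.unitaryGroup (Fin d) ℂ := by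
    rw [Matrix.mem_unitaryGroup_iff]
    rw [star_smul, star_one, Matrix.smul_mul, Matrix.mul_smul, one_mul, smul_smul]
    rw [show z * star z = 1 from hzu, one_smul]
  set V : Matrix.unitaryGroup (Fin d) ℂ := ⟨z • 1, hVmem⟩ with hV
  set c : ℂ := z ^ k₁ * ((starRingEnd ℂ) z) ^ k₂ with hcdef
  set F : Matrix.unitaryGroup (Fin d) ℂ →
      Matrix ((Fin k₁ → Fin d) × (Fin k₂ → Fin d)) ((Fin k₁ → Fin d) × (Fin k₂ → Fin d)) ℂ :=
    fun U => tensorPow k₁ (U : Matrix (Fin d) (Fin d) ℂ) ⊗ₖ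
      tensorPow k₂ ((U : Matrix (Fin d) (Fin d) ℂ).map (starRingEnd ℂ)) with hF
  have key : ∀ U i j, F (V * U) i j = c * F U i j := by
    intro U i j
    have hVU : ((V * U : Matrix.unitaryGroup (Fin d) ℂ) : Matrix (Fin d) (Fin d) ℂ)
        = z • (U : Matrix (Fin d) (Fin d) ℂ) := by
      push_cast [hV]
      rw [Matrix.smul_mul, one_mul]
    obtain ⟨i₁, i₂⟩ := i
    obtain ⟨j₁, j₂⟩ := j
    simp only [hF, Matrix.kroneckerMap_apply, hVU, tensorPow, Matrix.of_apply]
    have h1 : ∏ j : Fin k₁, (z • (U : Matrix (Fin d) (Fin d) ℂ)) (i₁ j) (j₁ j)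
        = z ^ k₁ * ∏ j : Fin k₁, (U : Matrix (Fin d) (Fin d) ℂ) (i₁ j) (j₁ j) := by
      simp [Matrix.smul_apply, Finset.prod_mul_distrib, smul_eq_mul]
    have h2 : ∏ j : Fin k₂, ((z • (U : Matrix (Fin d) (Fin d) ℂ)).map (starRingEnd ℂ)) (i₂ j) (j₂ j)
        = ((starRingEnd ℂ) z) ^ k₂ *
          ∏ j : Fin k₂, ((U : Matrix (Fin d) (Fin d) ℂ).map (starRingEnd ℂ)) (i₂ j) (j₂ j) := by
      simp [Matrix.map_apply, Matrix.smul_apply, smul_eq_mul, _root_.map_mul, Finset.prod_mul_distrib]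
    rw [h1, h2, hcdef]
    ring
  -- entrywise
  ext i j
  show (∫ U, F U i j ∂μ) = 0
  have h1 : (∫ U, F (V * U) i j ∂μ) = ∫ U, F U i j ∂μ :=
    integral_mul_left_eq_self (fun U => F U i j) V
  have h2 : (∫ U, F (V * U) i j ∂μ) = c * ∫ U, F U i j ∂μ := by
    simp_rw [key, ← smul_eq_mul]
    exact integral_smul c _
  have h3 : c * (∫ U, F U i j ∂μ) = ∫ U, F U i j ∂μ := h2 ▸ h1
  rw [hc] at h3
  linear_combination (-1/2 : ℂ) * h3
end

section
/- Let d, k ≥ 1 and let P_1, …, P_r be a finite orthonormal basis of the subspace Comm(U(d), k) with respect to the Hilbert–Schmidt inner product. Then for every operator O on (ℂ^d)^{⊗k}, the k-th moment operator satisfies M^{(k)}(O) = Σ_{i=1}^{r} Tr(P_i† O) · P_i. In particular, M^{(k)} is the orthogonal projection onto Comm(U(d), k) with respect to the Hilbert–Schmidt inner product. -/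
open MeasureTheory Matrix

/-- The `k`-th moment operator `O ↦ ∫ U^{⊗k} O (U^{⊗k})† dμ(U)`. -/
noncomputable def momentOp (d k : ℕ) (μ : Measure (Matrix.unitaryGroup (Fin d) ℂ))
    (A : Matrix (Fin k → Fin d) (Fin k → Fin d) ℂ) :
    Matrix (Fin k → Fin d) (Fin k → Fin d) ℂ :=
  matInt μ (fun U => tensorPow k (U : Matrix (Fin d) (Fin d) ℂ) * A *
    (tensorPow k (U : Matrix (Fin d) (Fin d) ℂ))ᴴ)

/-- The `k`-th order commutant of the unitary group, as a subspace of the space of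
operators on `(ℂ^d)^{⊗k}`. -/
noncomputable def commutant (d k : ℕ) : Submodule ℂ (Matrix (Fin k → Fin d) (Fin k → Fin d) ℂ) where
  carrier := {A | ∀ V : Matrix.unitaryGroup (Fin d) ℂ,
    A * tensorPow k (V : Matrix (Fin d) (Fin d) ℂ) =
      tensorPow k (V : Matrix (Fin d) (Fin d) ℂ) * A}
  add_mem' := by
    intro a b ha hb V
    simp only [add_mul, mul_add, ha V, hb V]
  zero_mem' := by
    intro V
    simp
  smul_mem' := by
    intro c a ha V
    simp only [smul_mul_assoc, mul_smul_comm, ha V]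

/-! ### Auxiliary lemmas -/

section TensorPowAux

variable {d k : ℕ}

lemma tensorPow_mul (A B : Matrix (Fin d) (Fin d) ℂ) :
    tensorPow k (A * B) = tensorPow k A * tensorPow k B := by
  ext f g
  simp only [tensorPow, Matrix.of_apply, Matrix.mul_apply]
  rw [Finset.prod_univ_sum]
  rw [Fintype.piFinset_univ]
  exact Finset.sum_congr rfl fun h _ => Finset.prod_mul_distrib

lemma tensorPow_conjTranspose (A : Matrix (Fin d) (Fin d) ℂ) :
    (tensorPow k A)ᴴ = tensorPow k Aᴴ := by
  ext f g
  simp only [tensorPow, Matrix.conjTranspose_apply, Matrix.of_apply, star,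
    RingHom.toMonoidHom_eq_coe]
  exact map_prod (starRingEnd ℂ) _ _

lemma tensorPow_one : tensorPow k (1 : Matrix (Fin d) (Fin d) ℂ) = 1 := by
  ext f g
  by_cases h : f = g
  · subst h; simp [tensorPow, Matrix.one_apply]
  · obtain ⟨j, hj⟩ : ∃ j, f j ≠ g j := by
      by_contra hc; push_neg at hc; exact h (funext hc)
    rw [Matrix.one_apply_ne h]
    exact Finset.prod_eq_zero (Finset.mem_univ j) (Matrix.one_apply_ne hj)

lemma continuous_tensorPow :
    Continuous fun U : Matrix.unitaryGroup (Fin d) ℂ =>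
      tensorPow k (U : Matrix (Fin d) (Fin d) ℂ) := by
  apply continuous_matrix
  intro f g
  simp only [tensorPow, Matrix.of_apply]
  apply continuous_finset_prod
  intro j _
  have h1 : Continuous fun U : Matrix.unitaryGroup (Fin d) ℂ =>
      (U : Matrix (Fin d) (Fin d) ℂ) := continuous_subtype_val
  exact (h1.matrix_elem (f j) (g j))

lemma isCompact_unitaryGroup :
    IsCompact (Matrix.unitaryGroup (Fin d) ℂ : Set (Matrix (Fin d) (Fin d) ℂ)) := by
  have hK : IsCompact (Set.univ.pi fun _ : Fin d =>
      (Set.univ.pi fun _ : Fin d => Metric.closedBall (0 : ℂ) 1)) :=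
    isCompact_univ_pi fun _ => isCompact_univ_pi fun _ => isCompact_closedBall _ _
  apply hK.of_isClosed_subset
  · have : (Matrix.unitaryGroup (Fin d) ℂ : Set (Matrix (Fin d) (Fin d) ℂ)) =
        {M | M * Mᴴ = 1} ∩ {M | Mᴴ * M = 1} := by
      ext M
      simp only [SetLike.mem_coe, Set.mem_inter_iff, Set.mem_setOf_eq, Unitary.mem_iff,
        Matrix.star_eq_conjTranspose, and_comm]
    rw [this]
    exact (isClosed_eq (continuous_id.matrix_mul continuous_id.matrix_conjTranspose)
        continuous_const).inter
      (isClosed_eq (continuous_id.matrix_conjTranspose.matrix_mul continuous_id)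
        continuous_const)
  · intro M hM
    simp only [Set.mem_pi, Set.mem_univ, forall_true_left, Metric.mem_closedBall,
      dist_zero_right]
    intro i j
    exact entry_norm_bound_of_unitary hM i j

instance instBorelUG (d : ℕ) : BorelSpace (Matrix.unitaryGroup (Fin d) ℂ) := ⟨rfl⟩

instance instCompactUG (d : ℕ) : CompactSpace (Matrix.unitaryGroup (Fin d) ℂ) :=
  isCompact_iff_compactSpace.mp isCompact_unitaryGroup

lemma integrable_of_continuous {μ : Measure (Matrix.unitaryGroup (Fin d) ℂ)}
    [IsProbabilityMeasure μ] {f : Matrix.unitaryGroup (Fin d) ℂ → ℂ} (hf : Continuous f) :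
    Integrable f μ := by
  have := hf.continuousOn.integrableOn_compact (μ := μ) isCompact_univ
  rwa [integrableOn_univ] at this

end TensorPowAux

section MatIntAux

variable {G : Type*} [MeasurableSpace G] {μ : Measure G}
variable {m n p : Type*} [Fintype m] [Fintype n] [Fintype p]

lemma matInt_mul_left {f : G → Matrix n p ℂ} (hf : ∀ i j, Integrable (fun U => f U i j) μ)
    (C : Matrix m n ℂ) :
    matInt μ (fun U => C * f U) = C * matInt μ f := by
  ext i j
  simp only [matInt, Matrix.of_apply, Matrix.mul_apply]
  rw [integral_finset_sum _ fun l _ => (hf l j).const_mul _]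
  simp only [MeasureTheory.integral_const_mul]

lemma matInt_mul_right {f : G → Matrix m n ℂ} (hf : ∀ i j, Integrable (fun U => f U i j) μ)
    (C : Matrix n p ℂ) :
    matInt μ (fun U => f U * C) = matInt μ f * C := by
  ext i j
  simp only [matInt, Matrix.of_apply, Matrix.mul_apply]
  rw [integral_finset_sum _ fun l _ => (hf i l).mul_const _]
  simp only [MeasureTheory.integral_mul_const]

lemma trace_matInt {f : G → Matrix n n ℂ} (hf : ∀ i j, Integrable (fun U => f U i j) μ) :
    (matInt μ f).trace = ∫ U, (f U).trace ∂μ := by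
  simp only [Matrix.trace, Matrix.diag, matInt, Matrix.of_apply]
  rw [← integral_finset_sum _ fun i _ => hf i i]

lemma integrable_matrix_const_mul {f : G → Matrix n p ℂ}
    (hf : ∀ i j, Integrable (fun U => f U i j) μ) (C : Matrix m n ℂ) (i : m) (j : p) :
    Integrable (fun U => (C * f U) i j) μ := by
  simp only [Matrix.mul_apply]
  exact integrable_finset_sum _ fun l _ => ((hf l j).const_mul _)

end MatIntAux

/-- If `P_1, …, P_r` is an orthonormal basis of `Comm(U(d), k)` for the
Hilbert–Schmidt inner product, then the Haar `k`-th moment operator is given by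
`M^{(k)}(O) = Σ_i Tr(P_i† O) • P_i`; in particular it is the orthogonal projection onto
the commutant: it is Hilbert–Schmidt self-adjoint, maps into the commutant, and fixes it. -/
theorem momentOp_eq_proj_commutant {d k : ℕ} (hd : 1 ≤ d) (hk : 1 ≤ k)
    (μ : Measure (Matrix.unitaryGroup (Fin d) ℂ)) [IsProbabilityMeasure μ]
    [μ.IsMulLeftInvariant] [μ.IsMulRightInvariant]
    (r : ℕ) (P : Fin r → Matrix (Fin k → Fin d) (Fin k → Fin d) ℂ)
    (hmem : ∀ i, P i ∈ commutant d k)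
    (horth : ∀ i j, ((P i)ᴴ * P j).trace = if i = j then 1 else 0)
    (hspan : Submodule.span ℂ (Set.range P) = commutant d k) :
    (∀ O : Matrix (Fin k → Fin d) (Fin k → Fin d) ℂ,
        momentOp d k μ O = ∑ i, ((P i)ᴴ * O).trace • P i) ∧
    (∀ A B : Matrix (Fin k → Fin d) (Fin k → Fin d) ℂ,
        ((momentOp d k μ A)ᴴ * B).trace = (Aᴴ * momentOp d k μ B).trace) ∧
    (∀ O : Matrix (Fin k → Fin d) (Fin k → Fin d) ℂ, momentOp d k μ O ∈ commutant d k) ∧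
    (∀ A ∈ commutant d k, momentOp d k μ A = A) := by
  -- notation
  set T : Matrix.unitaryGroup (Fin d) ℂ → Matrix (Fin k → Fin d) (Fin k → Fin d) ℂ :=
    fun U => tensorPow k (U : Matrix (Fin d) (Fin d) ℂ) with hT
  -- continuity and integrability of the integrand
  have hcont : ∀ O : Matrix (Fin k → Fin d) (Fin k → Fin d) ℂ,
      Continuous fun U : Matrix.unitaryGroup (Fin d) ℂ => T U * O * (T U)ᴴ :=
    fun O => (continuous_tensorPow.matrix_mul continuous_const).matrix_mul
      continuous_tensorPow.matrix_conjTranspose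
  have hint : ∀ (O : Matrix (Fin k → Fin d) (Fin k → Fin d) ℂ) i j,
      Integrable (fun U : Matrix.unitaryGroup (Fin d) ℂ => (T U * O * (T U)ᴴ) i j) μ :=
    fun O i j => integrable_of_continuous ((hcont O).matrix_elem i j)
  -- unitarity of tensor powers
  have hUUs : ∀ U : Matrix.unitaryGroup (Fin d) ℂ, T U * (T U)ᴴ = 1 := by
    intro U
    rw [hT]
    rw [tensorPow_conjTranspose, ← tensorPow_mul, ← Matrix.star_eq_conjTranspose,
      Unitary.mul_star_self_of_mem U.2, tensorPow_one]
  have hUsU : ∀ U : Matrix.unitaryGroup (Fin d) ℂ, (T U)ᴴ * T U = 1 := by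
    intro U
    rw [hT]
    rw [tensorPow_conjTranspose, ← tensorPow_mul, ← Matrix.star_eq_conjTranspose,
      Unitary.star_mul_self_of_mem U.2, tensorPow_one]
  -- the moment operator fixes the commutant
  have hfix : ∀ A ∈ commutant d k, momentOp d k μ A = A := by
    intro A hA
    have h1 : ∀ U : Matrix.unitaryGroup (Fin d) ℂ, T U * A * (T U)ᴴ = A := by
      intro U
      have hAU := hA U
      rw [hT] at *
      rw [← hAU, mul_assoc, hUUs U, mul_one]
    unfold momentOp
    ext i j
    simp only [matInt, Matrix.of_apply]
    have : (fun U : Matrix.unitaryGroup (Fin d) ℂ =>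
        (tensorPow k (U : Matrix (Fin d) (Fin d) ℂ) * A *
          (tensorPow k (U : Matrix (Fin d) (Fin d) ℂ))ᴴ) i j) = fun _ => A i j := by
      funext U
      rw [show tensorPow k (U : Matrix (Fin d) (Fin d) ℂ) * A *
          (tensorPow k (U : Matrix (Fin d) (Fin d) ℂ))ᴴ = A from h1 U]
    rw [this, integral_const]
    simp
  -- the image of the moment operator lies in the commutant
  have hcomm : ∀ O : Matrix (Fin k → Fin d) (Fin k → Fin d) ℂ,
      momentOp d k μ O ∈ commutant d k := by
    intro O V
    have hR : momentOp d k μ O * T V = matInt μ (fun U => T U * O * (T U)ᴴ * T V) :=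
      (matInt_mul_right (hint O) _).symm
    have hL : T V * momentOp d k μ O = matInt μ (fun U => T V * (T U * O * (T U)ᴴ)) :=
      (matInt_mul_left (hint O) _).symm
    show momentOp d k μ O * T V = T V * momentOp d k μ O
    rw [hR, hL]
    have hcm : ∀ U : Matrix.unitaryGroup (Fin d) ℂ,
        ((V⁻¹ * U : Matrix.unitaryGroup (Fin d) ℂ) : Matrix (Fin d) (Fin d) ℂ)
          = ((V : Matrix (Fin d) (Fin d) ℂ))ᴴ * (U : Matrix (Fin d) (Fin d) ℂ) := by
      intro U
      simp [Matrix.UnitaryGroup.inv_apply, Matrix.star_eq_conjTranspose]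
    have hcancel : ∀ X : Matrix (Fin k → Fin d) (Fin k → Fin d) ℂ,
        tensorPow k (V : Matrix (Fin d) (Fin d) ℂ) *
          (tensorPow k ((V : Matrix (Fin d) (Fin d) ℂ))ᴴ * X) = X := by
      intro X
      rw [← mul_assoc, ← tensorPow_mul, ← Matrix.star_eq_conjTranspose,
        Unitary.mul_star_self_of_mem V.2, tensorPow_one, one_mul]
    have key : ∀ U : Matrix.unitaryGroup (Fin d) ℂ,
        T V * (T (V⁻¹ * U) * O * (T (V⁻¹ * U))ᴴ) = T U * O * (T U)ᴴ * T V := by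
      intro U
      rw [hT]
      simp only [hcm, tensorPow_mul, tensorPow_conjTranspose, Matrix.conjTranspose_mul,
        Matrix.conjTranspose_conjTranspose, mul_assoc, hcancel]
    have : matInt μ (fun U => T V * (T U * O * (T U)ᴴ)) =
        matInt μ (fun U => T V * (T (V⁻¹ * U) * O * (T (V⁻¹ * U))ᴴ)) := by
      ext i j
      simp only [matInt, Matrix.of_apply]
      exact (integral_mul_left_eq_self
        (fun W => (T V * (T W * O * (T W)ᴴ)) i j) V⁻¹).symm
    rw [show (fun U : Matrix.unitaryGroup (Fin d) ℂ => T U * O * (T U)ᴴ * T V)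
        = (fun U : Matrix.unitaryGroup (Fin d) ℂ =>
            T V * (T (V⁻¹ * U) * O * (T (V⁻¹ * U))ᴴ)) from funext fun U => (key U).symm]
    exact this.symm
  -- the key coefficient identity
  have hCoef : ∀ (n : Fin r) (O : Matrix (Fin k → Fin d) (Fin k → Fin d) ℂ),
      ((P n)ᴴ * momentOp d k μ O).trace = ((P n)ᴴ * O).trace := by
    intro n O
    have trace_eq : ∀ U : Matrix.unitaryGroup (Fin d) ℂ,
        ((P n)ᴴ * (T U * O * (T U)ᴴ)).trace = ((P n)ᴴ * O).trace := by
      intro U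
      have h1 : (T U)ᴴ * (P n)ᴴ = (P n)ᴴ * (T U)ᴴ := by
        have := congrArg Matrix.conjTranspose (hmem n U)
        simpa [Matrix.conjTranspose_mul] using this
      have step1 : (P n)ᴴ * (T U * O * (T U)ᴴ) = ((P n)ᴴ * T U * O) * (T U)ᴴ := by
        simp only [mul_assoc]
      rw [step1, Matrix.trace_mul_comm]
      have step2 : (T U)ᴴ * ((P n)ᴴ * T U * O) = (P n)ᴴ * O := by
        calc (T U)ᴴ * ((P n)ᴴ * T U * O) = ((T U)ᴴ * (P n)ᴴ) * (T U * O) := by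
              simp only [mul_assoc]
          _ = ((P n)ᴴ * (T U)ᴴ) * (T U * O) := by rw [h1]
          _ = (P n)ᴴ * O := by
              rw [mul_assoc, ← mul_assoc ((T U)ᴴ), hUsU U, one_mul]
      rw [step2]
    unfold momentOp
    rw [← matInt_mul_left (hint O) ((P n)ᴴ)]
    rw [trace_matInt (fun i j => integrable_matrix_const_mul (hint O) ((P n)ᴴ) i j)]
    have : (fun U : Matrix.unitaryGroup (Fin d) ℂ =>
        ((P n)ᴴ * (tensorPow k (U : Matrix (Fin d) (Fin d) ℂ) * O *
          (tensorPow k (U : Matrix (Fin d) (Fin d) ℂ))ᴴ)).trace) =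
        fun _ => ((P n)ᴴ * O).trace := by
      funext U
      exact trace_eq U
    rw [this, integral_const]
    simp
  -- the expansion
  have hexp : ∀ O : Matrix (Fin k → Fin d) (Fin k → Fin d) ℂ,
      momentOp d k μ O = ∑ i, ((P i)ᴴ * O).trace • P i := by
    intro O
    have hmemM : momentOp d k μ O ∈ Submodule.span ℂ (Set.range P) := by
      rw [hspan]; exact hcomm O
    obtain ⟨c, hc⟩ := Submodule.mem_span_range_iff_exists_fun ℂ |>.mp hmemM
    have hcn : ∀ n, c n = ((P n)ᴴ * O).trace := by
      intro n
      have h0 : ((P n)ᴴ * ∑ i, c i • P i).trace = c n := by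
        rw [Matrix.mul_sum, Matrix.trace_sum]
        simp only [Matrix.mul_smul, Matrix.trace_smul, horth, smul_eq_mul, mul_ite, mul_one,
          mul_zero]
        simp [Finset.sum_ite_eq]
      have := hCoef n O
      rw [← hc, h0] at this
      exact this
    rw [← hc]
    exact Finset.sum_congr rfl fun i _ => by rw [hcn i]
  refine ⟨hexp, ?_, hcomm, hfix⟩
  -- self-adjointness
  intro A B
  rw [hexp A, hexp B]
  have hstar : ∀ (i : Fin r) (X : Matrix (Fin k → Fin d) (Fin k → Fin d) ℂ),
      (Xᴴ * P i).trace = star (((P i)ᴴ * X).trace) := by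
    intro i X
    rw [← Matrix.trace_conjTranspose, Matrix.conjTranspose_mul,
      Matrix.conjTranspose_conjTranspose]
  rw [Matrix.conjTranspose_sum]
  simp only [Matrix.conjTranspose_smul, Finset.sum_mul, Matrix.smul_mul, Matrix.mul_sum,
    Matrix.mul_smul, Matrix.trace_sum, Matrix.trace_smul, smul_eq_mul]
  refine Finset.sum_congr rfl fun i _ => ?_
  rw [hstar i A, mul_comm]
end

section
/- Let d, k ≥ 1. The family of permutation operators (V_d(π))_{π ∈ S_k} on (ℂ^d)^{⊗k} is linearly independent over ℂ if k ≤ d, and is linearly dependent if k > d; in the latter case, Σ_{π ∈ S_k} sgn(π) V_d(π) = 0. -/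
/-!
If `k ≤ d`, evaluating `Σ_σ c_σ V_d(σ)` at the entry `(f, f ∘ π)` for an injective
`f : Fin k → Fin d` isolates `c_π`. If `d < k`, every `f : Fin k → Fin d` has `f i = f j` for some
`i ≠ j`, so `π ↦ swap i j * π` is a fixed-point-free involution that preserves the entry
`[f ∘ π = g]` and reverses the sign; hence every entry of the signed sum cancels, and the signed
sum is a nontrivial vanishing linear combination.
-/

open Matrix

/-- The permutation operator `V_d(π)` on `(ℂ^d)^{⊗k} ≅ ℂ^{Fin k → Fin d}`, with entries
`(V_d(π))_{f,g} = 1` if `f ∘ π = g` and `0` otherwise. -/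
def permOp (d k : ℕ) (π : Equiv.Perm (Fin k)) :
    Matrix (Fin k → Fin d) (Fin k → Fin d) ℂ :=
  Matrix.of fun f g => if f ∘ π = g then 1 else 0

open Equiv Finset

theorem Function.comp_swap_eq_self {α β : Type*} [DecidableEq α] {f : α → β} {i j : α}
    (h : f i = f j) : f ∘ Equiv.swap i j = f := by
  rw [comp_swap_eq_update, h, Function.update_eq_self, ← h, Function.update_eq_self]

theorem Equiv.Perm.sum_sign_smul_eq_zero_of_swap_mul {α M : Type*} [Fintype α] [DecidableEq α]
    [AddCommGroup M] {G : Perm α → M} {i j : α} (hij : i ≠ j)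
    (hG : ∀ π, G (swap i j * π) = G π) : ∑ π, Perm.sign π • G π = 0 :=
  sum_ninvolution (swap i j * ·)
    (fun π => by simp [Perm.sign_mul, Perm.sign_swap hij, hG])
    (fun _ _ => by simpa [mul_eq_right, swap_eq_one_iff] using hij)
    (fun _ => mem_univ _)
    (fun π => by simp [← mul_assoc])

@[simp]
theorem permOp_apply (d k : ℕ) (π : Perm (Fin k)) (f g : Fin k → Fin d) :
    permOp d k π f g = if f ∘ π = g then 1 else 0 :=
  rfl

theorem permOp_apply_comp_of_injective {d k : ℕ} {f : Fin k → Fin d}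
    (hf : Function.Injective f) (σ π : Perm (Fin k)) :
    permOp d k σ f (f ∘ π) = if σ = π then 1 else 0 := by
  simp only [permOp_apply, hf.comp_left.eq_iff, DFunLike.coe_fn_eq]

theorem linearIndependent_permOp {d k : ℕ} (h : k ≤ d) : LinearIndependent ℂ (permOp d k) := by
  refine Fintype.linearIndependent_iff.2 fun c hc π => ?_
  have hentry := congr_fun₂ hc (Fin.castLE h) (Fin.castLE h ∘ π)
  simpa only [Matrix.sum_apply, Matrix.smul_apply, Matrix.zero_apply, smul_eq_mul, mul_ite,
    mul_one, mul_zero, permOp_apply_comp_of_injective (Fin.castLE_injective h), Fintype.sum_ite_eq']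
    using hentry

theorem sum_sign_smul_permOp_eq_zero {d k : ℕ} (h : d < k) :
    ∑ π : Perm (Fin k), ((Perm.sign π : ℤ) : ℂ) • permOp d k π = 0 := by
  ext f g
  obtain ⟨i, j, hij, hfij⟩ := Fintype.exists_ne_map_eq_of_card_lt f (by simpa using h)
  have hswap : ∀ π : Perm (Fin k), f ∘ ⇑(swap i j * π) = f ∘ π := fun π => by
    rw [Perm.coe_mul, ← Function.comp_assoc, Function.comp_swap_eq_self hfij]
  simpa [Matrix.sum_apply, Units.smul_def] using
    Perm.sum_sign_smul_eq_zero_of_swap_mul (G := fun π => permOp d k π f g) hij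
      (fun π => by simp only [permOp_apply, hswap])

theorem permOp_linearIndependent_iff_general {d k : ℕ} :
    (k ≤ d → LinearIndependent ℂ (permOp d k)) ∧
    (d < k → ¬ LinearIndependent ℂ (permOp d k) ∧
      ∑ π : Equiv.Perm (Fin k), ((Equiv.Perm.sign π : ℤ) : ℂ) • permOp d k π = 0) := by
  refine ⟨linearIndependent_permOp, fun h => ⟨?_, sum_sign_smul_permOp_eq_zero h⟩⟩
  exact Fintype.not_linearIndependent_iff.2
    ⟨_, sum_sign_smul_permOp_eq_zero h, 1, by simp⟩

/-- The family of permutation operators `(V_d(π))_{π ∈ S_k}` is linearly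
independent over `ℂ` when `k ≤ d`, and linearly dependent when `k > d`; in the latter
case the signed sum `Σ_π sgn(π) V_d(π)` vanishes. -/
theorem permOp_linearIndependent_iff {d k : ℕ} (hd : 1 ≤ d) (hk : 1 ≤ k) :
    (k ≤ d → LinearIndependent ℂ (permOp d k)) ∧
    (d < k → ¬ LinearIndependent ℂ (permOp d k) ∧
      ∑ π : Equiv.Perm (Fin k), ((Equiv.Perm.sign π : ℤ) : ℂ) • permOp d k π = 0) :=
  permOp_linearIndependent_iff_general
end

section
/- Let d ≥ 1. The second-order commutant of the unitary group equals the span of the identity and the Flip: an operator Q on ℂ^d ⊗ ℂ^d satisfies Q · (U ⊗ U) = (U ⊗ U) · Q for every U ∈ U(d) if and only if Q is a complex linear combination of 𝕀 and 𝔽. -/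
/-!
Diagonal phase unitaries `diag(1, …, i, …, 1)` force `Q_{p,q} = 0` unless `{p₁, p₂} = {q₁, q₂}`
as multisets, i.e. unless `q = p` or `q = swap p`. Permutation matrices make the surviving
entries constant on orbits: `Q_{(i,j),(i,j)} = a` and `Q_{(i,j),(j,i)} = b` for `i ≠ j`, and
`Q_{(i,i),(i,i)} = c`. One reflection `2vv* - 1` mixing `e_i` and `e_j` then gives `c = a + b`,
which says exactly that `Q = a 𝕀 + b 𝔽`.
-/

open Matrix
open scoped Kronecker

/-- The Flip (SWAP) operator `𝔽` on `ℂ^d ⊗ ℂ^d`, with entries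
`𝔽_{(i,j),(k,l)} = 1` if `i = l` and `j = k`, and `0` otherwise. -/
def flipOp (d : ℕ) : Matrix (Fin d × Fin d) (Fin d × Fin d) ℂ :=
  Matrix.of fun p q => if p.1 = q.2 ∧ p.2 = q.1 then 1 else 0

theorem Complex.injOn_I_pow : Set.InjOn (Complex.I ^ ·) (Set.Iio 4) := by
  intro a ha b hb h
  simp only [Set.mem_Iio] at ha hb
  interval_cases a <;> interval_cases b <;> first | rfl | norm_num [Complex.ext_iff, pow_succ] at h

theorem Prod.eq_or_eq_swap_of_indicator_add_eq {n : Type*} [DecidableEq n] {p q : n × n}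
    (h : ∀ m, (if p.1 = m then 1 else 0) + (if p.2 = m then 1 else 0) =
      ((if q.1 = m then 1 else 0) + (if q.2 = m then 1 else 0) : ℕ)) :
    q = p ∨ q = p.swap := by
  have := h p.1; have := h p.2; have := h q.1
  grind

namespace Matrix

theorem isStarProjection_vecMulVec {n R : Type*} [Fintype n] [CommRing R] [StarRing R]
    {v : n → R} (hv : star v ⬝ᵥ v = 1) : IsStarProjection (vecMulVec v (star v)) where
  isIdempotentElem := by rw [IsIdempotentElem, vecMulVec_mul_vecMulVec, hv, one_smul]
  isSelfAdjoint := by rw [IsSelfAdjoint, star_eq_conjTranspose, conjTranspose_vecMulVec, star_star]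

theorem permMatrix_kronecker_permMatrix {n R : Type*} [DecidableEq n] [CommRing R]
    (σ τ : Equiv.Perm n) :
    σ.permMatrix R ⊗ₖ τ.permMatrix R = Equiv.Perm.permMatrix R (σ.prodCongr τ) := by
  ext p q
  simp only [kroneckerMap_apply, PEquiv.toMatrix_apply, Equiv.toPEquiv_apply, Option.mem_def,
    Option.some.injEq, Equiv.prodCongr_apply, Prod.ext_iff, Prod.map_fst, Prod.map_snd]
  split_ifs <;> simp_all

section

variable {n R : Type*} [Fintype n] [DecidableEq n]

theorem apply_eq_zero_of_mul_diagonal_eq [CommRing R] [NoZeroDivisors R] {Q : Matrix n n R}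
    {t : n → R} (h : Q * diagonal t = diagonal t * Q) {p q : n} (hpq : t p ≠ t q) :
    Q p q = 0 := by
  have hpq' : Q p q * t q = t p * Q p q := by
    simpa only [mul_diagonal, diagonal_mul] using congrFun (congrFun h p) q
  have hzero : Q p q * (t q - t p) = 0 := by linear_combination hpq'
  exact (mul_eq_zero.mp hzero).resolve_right (sub_ne_zero.mpr hpq.symm)

theorem apply_apply_of_mul_permMatrix_eq [NonAssocSemiring R] {Q : Matrix n n R}
    {σ : Equiv.Perm n} (h : Q * σ.permMatrix R = σ.permMatrix R * Q) (p q : n) :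
    Q (σ p) (σ q) = Q p q := by
  rw [PEquiv.mul_toMatrix_toPEquiv, PEquiv.toMatrix_toPEquiv_mul] at h
  simpa using (congrFun (congrFun h p) (σ q)).symm

theorem permMatrix_prodComm_mul_kronecker [CommRing R] (A B : Matrix n n R) :
    Equiv.Perm.permMatrix R (Equiv.prodComm n n) * (A ⊗ₖ B) =
      (B ⊗ₖ A) * Equiv.Perm.permMatrix R (Equiv.prodComm n n) := by
  rw [PEquiv.toMatrix_toPEquiv_mul, PEquiv.mul_toMatrix_toPEquiv]
  ext p q
  exact mul_comm _ _

theorem diagonal_mem_unitaryGroup [CommRing R] [StarRing R] {t : n → R}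
    (ht : ∀ i, t i ∈ unitary R) : diagonal t ∈ unitaryGroup n R := by
  rw [mem_unitaryGroup_iff, star_eq_conjTranspose, diagonal_conjTranspose,
    diagonal_mul_diagonal, ← diagonal_one]
  exact congrArg diagonal (funext fun i => Unitary.mul_star_self_of_mem (ht i))

theorem permMatrix_mem_unitaryGroup [CommRing R] [StarRing R] (σ : Equiv.Perm n) :
    σ.permMatrix R ∈ unitaryGroup n R := by
  rw [mem_unitaryGroup_iff, star_eq_conjTranspose, conjTranspose_permMatrix, ← permMatrix_mul,
    inv_mul_cancel, permMatrix_one]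

theorem exists_unitary_apply_mul_apply_ne_zero {i j : n} (hij : i ≠ j) :
    ∃ U : unitaryGroup n ℂ, (U : Matrix n n ℂ) i i * (U : Matrix n n ℂ) j i ≠ 0 := by
  -- not `(e_i + e_j) / √2`: its reflection has `U i i = 2 |v i|² - 1 = 0`
  let v : n → ℂ := Pi.single i (3 / 5) + Pi.single j (4 / 5)
  have hv : star v ⬝ᵥ v = 1 := by
    norm_num [v, dotProduct_add, dotProduct_single, hij, hij.symm]
  refine ⟨⟨_, (isStarProjection_vecMulVec hv).two_mul_sub_one_mem_unitary⟩, ?_⟩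
  norm_num [v, two_mul, vecMulVec_apply, hij, hij.symm]

end

section Commutant

variable {n : Type*} [Fintype n] [DecidableEq n] {Q : Matrix (n × n) (n × n) ℂ}
  (hQ : ∀ U : unitaryGroup n ℂ, Commute Q ((U : Matrix n n ℂ) ⊗ₖ (U : Matrix n n ℂ)))
include hQ

theorem apply_eq_zero_of_forall_commute_kronecker {p q : n × n} (hp : q ≠ p)
    (hs : q ≠ p.swap) : Q p q = 0 := by
  by_contra hpq
  refine (Prod.eq_or_eq_swap_of_indicator_add_eq fun m => ?_).elim hp hs
  -- `I ^ k`, `k ≤ 2`, records how often `m` occurs in a pair (the phase `-1` only gives parity)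
  let t : n → ℂ := fun x => Complex.I ^ (if x = m then 1 else 0)
  have ht : diagonal t ∈ unitaryGroup n ℂ :=
    diagonal_mem_unitaryGroup fun x => pow_mem (by simp [Unitary.mem_iff]) _
  have h := hQ ⟨_, ht⟩
  simp only [diagonal_kronecker_diagonal] at h
  have hphase := not_imp_comm.mp (apply_eq_zero_of_mul_diagonal_eq h) hpq
  simp only [t, ← pow_add] at hphase
  refine Complex.injOn_I_pow ?_ ?_ hphase <;> split_ifs <;> norm_num

theorem apply_prodMap_of_forall_commute_kronecker (σ : Equiv.Perm n) (p q : n × n) :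
    Q (Prod.map σ σ p) (Prod.map σ σ q) = Q p q := by
  have h := hQ ⟨_, permMatrix_mem_unitaryGroup σ⟩
  rw [permMatrix_kronecker_permMatrix] at h
  exact apply_apply_of_mul_permMatrix_eq h p q

theorem apply_diag_eq_add_of_forall_commute_kronecker {i j : n} (hij : i ≠ j) :
    Q (i, i) (i, i) = Q (i, j) (i, j) + Q (i, j) (j, i) := by
  obtain ⟨U, hU⟩ := exists_unitary_apply_mul_apply_ne_zero hij
  have h := congrFun (congrFun (hQ U) (i, j)) (i, i)
  rw [mul_apply, mul_apply, Fintype.sum_eq_add (i, j) (j, i) (by simp [hij])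
      fun r hr => by rw [apply_eq_zero_of_forall_commute_kronecker hQ hr.1 hr.2, zero_mul],
    Fintype.sum_eq_single (i, i) fun r hr => by
      rw [apply_eq_zero_of_forall_commute_kronecker hQ (Ne.symm hr)
        fun h => hr (by simpa using congrArg Prod.swap h.symm), mul_zero]] at h
  simp only [kroneckerMap_apply] at h
  exact mul_right_cancel₀ hU (by linear_combination -h)

theorem eq_smul_one_add_smul_permMatrix_prodComm_of_forall_commute_kronecker :
    ∃ a b : ℂ, Q = a • 1 + b • Equiv.Perm.permMatrix ℂ (Equiv.prodComm n n) := by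
  rcases subsingleton_or_nontrivial n with hn | hn
  · refine ⟨Q.trace, 0, ?_⟩
    ext p q
    obtain rfl := Subsingleton.elim p q
    simp [trace, Fintype.sum_subsingleton _ p]
  obtain ⟨z₀, z₁, hz⟩ := exists_pair_ne n
  have hoff {i j : n} (hij : i ≠ j) :
      Q (i, j) (i, j) = Q (z₀, z₁) (z₀, z₁) ∧ Q (i, j) (j, i) = Q (z₀, z₁) (z₁, z₀) := by
    obtain ⟨σ, rfl, rfl⟩ := MulAction.is_two_pretransitive_iff.mp
      (Equiv.Perm.isMultiplyPretransitive n 2) hz hij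
    exact ⟨apply_prodMap_of_forall_commute_kronecker hQ σ (z₀, z₁) (z₀, z₁),
      apply_prodMap_of_forall_commute_kronecker hQ σ (z₀, z₁) (z₁, z₀)⟩
  refine ⟨Q (z₀, z₁) (z₀, z₁), Q (z₀, z₁) (z₁, z₀), ?_⟩
  ext ⟨i, j⟩ q
  simp only [add_apply, smul_apply, one_apply, PEquiv.toMatrix_apply, Equiv.toPEquiv_apply,
    Option.mem_def, Option.some.injEq, Equiv.prodComm_apply, Prod.swap_prod_mk, smul_eq_mul,
    mul_ite, mul_one, mul_zero]
  by_cases h₁ : (i, j) = q <;> by_cases h₂ : (j, i) = q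
  · subst h₁
    obtain rfl : i = j := (congrArg Prod.fst h₂).symm
    obtain ⟨k, hk⟩ := exists_ne i
    rw [if_pos rfl, if_pos rfl, apply_diag_eq_add_of_forall_commute_kronecker hQ hk.symm,
      (hoff hk.symm).1, (hoff hk.symm).2]
  · subst h₁
    have hij : i ≠ j := fun h => h₂ (by rw [h])
    rw [if_pos rfl, if_neg h₂, add_zero, (hoff hij).1]
  · subst h₂
    have hij : i ≠ j := fun h => h₁ (by rw [h])
    rw [if_neg h₁, if_pos rfl, zero_add, (hoff hij).2]
  · rw [if_neg h₁, if_neg h₂, add_zero]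
    exact apply_eq_zero_of_forall_commute_kronecker hQ (Ne.symm h₁) (Ne.symm h₂)

end Commutant

end Matrix

theorem flipOp_eq_permMatrix_prodComm (d : ℕ) :
    flipOp d = Equiv.Perm.permMatrix ℂ (Equiv.prodComm (Fin d) (Fin d)) := by
  ext p q
  simp [flipOp, PEquiv.toMatrix_apply, Prod.ext_iff, eq_comm, and_comm]

theorem commutant_two_eq_span_id_flip_general {d : ℕ}
    (Q : Matrix (Fin d × Fin d) (Fin d × Fin d) ℂ) :
    (∀ U : Matrix.unitaryGroup (Fin d) ℂ,
        Q * ((U : Matrix (Fin d) (Fin d) ℂ) ⊗ₖ (U : Matrix (Fin d) (Fin d) ℂ)) =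
          ((U : Matrix (Fin d) (Fin d) ℂ) ⊗ₖ (U : Matrix (Fin d) (Fin d) ℂ)) * Q) ↔
      ∃ a b : ℂ, Q = a • (1 : Matrix (Fin d × Fin d) (Fin d × Fin d) ℂ) + b • flipOp d := by
  rw [flipOp_eq_permMatrix_prodComm]
  refine ⟨eq_smul_one_add_smul_permMatrix_prodComm_of_forall_commute_kronecker, ?_⟩
  rintro ⟨a, b, rfl⟩ U
  exact ((Commute.one_left _).smul_left a).add_left
    (Commute.smul_left (permMatrix_prodComm_mul_kronecker (U : Matrix (Fin d) (Fin d) ℂ) U) b)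

/-- The second-order commutant of the unitary group is the span of the
identity and the Flip: `Q` commutes with `U ⊗ U` for every unitary `U` if and only if
`Q` is a complex linear combination of `𝕀` and `𝔽`. -/
theorem commutant_two_eq_span_id_flip {d : ℕ} (hd : 1 ≤ d)
    (Q : Matrix (Fin d × Fin d) (Fin d × Fin d) ℂ) :
    (∀ U : Matrix.unitaryGroup (Fin d) ℂ,
        Q * ((U : Matrix (Fin d) (Fin d) ℂ) ⊗ₖ (U : Matrix (Fin d) (Fin d) ℂ)) =
          ((U : Matrix (Fin d) (Fin d) ℂ) ⊗ₖ (U : Matrix (Fin d) (Fin d) ℂ)) * Q) ↔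
      ∃ a b : ℂ, Q = a • (1 : Matrix (Fin d × Fin d) (Fin d × Fin d) ℂ) + b • flipOp d :=
  commutant_two_eq_span_id_flip_general Q
end
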